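/- The class of languages accepted by quasi-deterministic sensing 5'→3' WK automata is a proper subset of the class of languages accepted by (nondeterministic) sensing 5'→3' WK automata; in particular, the language L = { aⁿbⁿ : n ≥ 0 } ∪ { aⁿb²ⁿ : n ≥ 0 } over {a,b} is accepted by a sensing 5'→3' WK automaton but by no quasi-deterministic sensing 5'→3' WK automaton. -/

import Mathlib

open Computability

/-- The two-letter alphabet `{a, b}`. -/
inductive Letter : Type
  | a : Letter
  | b : Letter
deriving DecidableEq

instance instFintypeLetter : Fintype Letter :=
  ⟨{Letter.a, Letter.b}, fun x => by cases x <;> simp⟩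

open Letter

/-- A sensing 5'→3' Watson-Crick automaton over the alphabet `T` with state set `Q`:
an initial state `q0`, a set `F` of final states, and a transition mapping
`δ : Q × T* × T* → 2^Q` that is nonempty for only finitely many triples. -/
structure WKAutomaton (T : Type) (Q : Type) where
  q0 : Q
  F : Set Q
  δ : Q → List T → List T → Set Q
  finite_delta : {t : Q × List T × List T | (δ t.1 t.2.1 t.2.2).Nonempty}.Finite

namespace WKAutomaton

variable {T Q : Type}

/-- One computation step on configurations:
`(q, x ++ w' ++ y) ⇒ (q', w')` iff `q' ∈ δ q x y`. -/
def Step (A : WKAutomaton T Q) (c c' : Q × List T) : Prop :=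
  ∃ x y : List T, c.2 = x ++ c'.2 ++ y ∧ c'.1 ∈ A.δ c.1 x y

/-- The accepted language: words `w` with `(q₀, w) ⇒* (q_F, λ)` for some final `q_F`. -/
def Lang (A : WKAutomaton T Q) : Set (List T) :=
  {w | ∃ qf ∈ A.F, Relation.ReflTransGen A.Step (A.q0, w) (qf, [])}

/-- `A` is deterministic: in every configuration at most one computation step
(choice of `x`, `y`, `w'`, `q'`) is applicable. -/
def Deterministic (A : WKAutomaton T Q) : Prop :=
  ∀ (q : Q) (w x₁ y₁ w₁ x₂ y₂ w₂ : List T) (q₁ q₂ : Q),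
    w = x₁ ++ w₁ ++ y₁ → q₁ ∈ A.δ q x₁ y₁ →
    w = x₂ ++ w₂ ++ y₂ → q₂ ∈ A.δ q x₂ y₂ →
    x₁ = x₂ ∧ y₁ = y₂ ∧ w₁ = w₂ ∧ q₁ = q₂

/-- `A` is quasi-deterministic: for every configuration `(q,w)`, whenever
`(q,w) ⇒ (p,u)` and `(q,w) ⇒ (r,v)`, it holds that `p = r`. -/
def QuasiDet (A : WKAutomaton T Q) : Prop :=
  ∀ (q : Q) (w : List T) (p r : Q) (u v : List T),
    A.Step (q, w) (p, u) → A.Step (q, w) (r, v) → p = r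

/-- `A` is state-deterministic: for every state `q` there is at most one state `p`
with `p ∈ δ(q,u,v)` for some words `u`, `v`. -/
def StateDet (A : WKAutomaton T Q) : Prop :=
  ∀ (q p₁ p₂ : Q) (u₁ v₁ u₂ v₂ : List T),
    p₁ ∈ A.δ q u₁ v₁ → p₂ ∈ A.δ q u₂ v₂ → p₁ = p₂

/-- `A` is stateless: `Q = F = {q₀}`. -/
def Stateless (A : WKAutomaton T Q) : Prop :=
  (∀ q : Q, q = A.q0) ∧ A.F = {A.q0}

/-- `A` is all-final: `Q = F`. -/
def AllFinal (A : WKAutomaton T Q) : Prop := A.F = Set.univ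

/-- `A` is simple: at most one head reads in each step. -/
def Simple (A : WKAutomaton T Q) : Prop :=
  ∀ (q : Q) (u v : List T), (A.δ q u v).Nonempty → u = [] ∨ v = []

/-- `A` is 1-limited: exactly one letter is read in each step. -/
def OneLimited (A : WKAutomaton T Q) : Prop :=
  ∀ (q : Q) (u v : List T), (A.δ q u v).Nonempty →
    (u = [] ∧ v.length = 1) ∨ (u.length = 1 ∧ v = [])

end WKAutomaton

/-- Equality of languages modulo the empty word. -/
def EqModLambda {T : Type} (L₁ L₂ : Set (List T)) : Prop :=
  ∀ w : List T, w ≠ [] → (w ∈ L₁ ↔ w ∈ L₂)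

/-- `L` is accepted (modulo the empty word) by some sensing 5'→3' WK automaton
with a finite state set satisfying the property `P`. -/
def AcceptsWith (T : Type) (P : ∀ Q : Type, WKAutomaton T Q → Prop)
    (L : Set (List T)) : Prop :=
  ∃ (Q : Type) (_ : Finite Q) (A : WKAutomaton T Q), P Q A ∧ EqModLambda A.Lang L

/-- The language `{ aⁿbⁿ : n ≥ 0 }`. -/
def Lanbn : Set (List Letter) :=
  {w | ∃ n : ℕ, w = List.replicate n a ++ List.replicate n b}

/-- The language `{ aⁿb²ⁿ : n ≥ 0 }`. -/
def Lanb2n : Set (List Letter) :=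
  {w | ∃ n : ℕ, w = List.replicate n a ++ List.replicate (2 * n) b}

/-!
The nondeterministic automaton guesses in its first step whether it reads `a` together with `b`
or with `bb`, and keeps doing so until the word is consumed.

Let `A` be quasi-deterministic with reads of length at most `c`. On a configuration `(q, aᵏbˡ)`
with `k, l > c` every applicable step reads some `aⁱ` and `bʲ`, and all of them lead to the same
state. Hence every accepting computation on a word `aⁿbᵐ` follows one fixed, eventually periodic,
state sequence `s₀ = q₀, s₁, …` as long as both blocks are long. Exchanging a single step between
computations on `aⁿbⁿ` and on `aⁿb²ⁿ` fixes both `j - i` and `j - 2i` for every pair `(i, j)` that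
can be read from `sᵣ` to `sᵣ₊₁`, so this pair is unique. Inserting one period of the state
sequence into such computations then adds the same `(α, β)` to both words, so `β = α` and
`β = 2α`: beyond the preperiod nothing is read, which is absurd for long words.
-/

open Finset Relation

def ab (k l : ℕ) : List Letter := List.replicate k a ++ List.replicate l b

theorem ab_add (i k l j : ℕ) :
    ab (i + k) (l + j) = List.replicate i a ++ ab k l ++ List.replicate j b := by
  simp only [ab, List.replicate_add, List.append_assoc]

theorem length_ab (k l : ℕ) : (ab k l).length = k + l := by
  simp [ab]

theorem ab_inj {k l k' l' : ℕ} : ab k l = ab k' l' ↔ k = k' ∧ l = l' := by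
  refine ⟨fun h => ⟨?_, ?_⟩, fun ⟨hk, hl⟩ => hk ▸ hl ▸ rfl⟩
  · simpa [ab, List.count_replicate] using congrArg (List.count a) h
  · simpa [ab, List.count_replicate] using congrArg (List.count b) h

theorem append_eq_ab {x u y : List Letter} {k l : ℕ}
    (h : x ++ u ++ y = ab (x.length + k) (l + y.length)) :
    x = List.replicate x.length a ∧ u = ab k l ∧ y = List.replicate y.length b := by
  rw [ab_add] at h
  obtain ⟨hxu, hy⟩ := List.append_inj' h (by simp)
  obtain ⟨hx, hu⟩ := List.append_inj hxu (by simp)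
  exact ⟨hx, hu, hy⟩

theorem ab_mem_union_iff {k l : ℕ} : ab k l ∈ Lanbn ∪ Lanb2n ↔ l = k ∨ l = 2 * k := by
  constructor
  · rintro (⟨n, hn⟩ | ⟨n, hn⟩)
    · obtain ⟨rfl, rfl⟩ := ab_inj.1 hn
      exact Or.inl rfl
    · obtain ⟨rfl, rfl⟩ := ab_inj.1 hn
      exact Or.inr rfl
  · rintro (rfl | rfl)
    exacts [Or.inl ⟨_, rfl⟩, Or.inr ⟨_, rfl⟩]

theorem ab_mem_iff_of_eqModLambda {L : Set (List Letter)} (hL : EqModLambda L (Lanbn ∪ Lanb2n))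
    {k l : ℕ} (h : 0 < k + l) : ab k l ∈ L ↔ l = k ∨ l = 2 * k := by
  rw [hL _ (List.ne_nil_of_length_pos (by rwa [length_ab])), ab_mem_union_iff]

theorem ab_self_mem_of_eqModLambda {L : Set (List Letter)} (hL : EqModLambda L (Lanbn ∪ Lanb2n))
    {n : ℕ} (hn : 0 < n) : ab n n ∈ L :=
  (ab_mem_iff_of_eqModLambda hL (by omega)).2 (Or.inl rfl)

theorem ab_two_mul_mem_of_eqModLambda {L : Set (List Letter)}
    (hL : EqModLambda L (Lanbn ∪ Lanb2n)) {n : ℕ} (hn : 0 < n) : ab n (2 * n) ∈ L :=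
  (ab_mem_iff_of_eqModLambda hL (by omega)).2 (Or.inr rfl)

theorem sum_range_add_of_periodic {M : Type*} [AddCommMonoid M] {f : ℕ → M} {N p : ℕ}
    (hf : ∀ r, N ≤ r → f (r + p) = f r) {r : ℕ} (hr : N ≤ r) :
    ∑ i ∈ range (r + p), f i = ∑ i ∈ range r, f i + ∑ i ∈ range p, f (N + i) := by
  induction r, hr using Nat.le_induction with
  | base => exact sum_range_add f N p
  | succ r hr ih =>
    rw [add_right_comm, sum_range_succ, ih, hf r hr, sum_range_succ, add_right_comm]

theorem sum_range_le_of_periodic {f : ℕ → ℕ} {N p : ℕ} (hf : ∀ r, N ≤ r → f (r + p) = f r)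
    (hp : 0 < p) (h : ∑ i ∈ range p, f (N + i) = 0) (R : ℕ) :
    ∑ i ∈ range R, f i ≤ ∑ i ∈ range N, f i := by
  induction R with
  | zero => simp
  | succ R ih =>
    rcases lt_or_ge R N with hR | hR
    · exact sum_le_sum_of_subset (range_subset_range.2 hR)
    · calc ∑ i ∈ range (R + 1), f i ≤ ∑ i ∈ range (R + p), f i :=
            sum_le_sum_of_subset (range_subset_range.2 (by omega))
        _ = ∑ i ∈ range R, f i := by rw [sum_range_add_of_periodic hf hR, h, add_zero]
        _ ≤ ∑ i ∈ range N, f i := ih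

def unionAutomaton : WKAutomaton Letter (Fin 3) where
  q0 := 0
  F := {p | p ≠ 0}
  δ q x y := {p | p ≠ 0 ∧ (q = 0 ∨ q = p) ∧ x = [a] ∧ y = List.replicate p b}
  finite_delta := by
    refine (Set.finite_range fun t : Fin 3 × Fin 3 => (t.1, [a], List.replicate t.2 b)).subset ?_
    rintro ⟨q, x, y⟩ ⟨p, -, -, rfl, rfl⟩
    exact ⟨(q, p), rfl⟩

namespace unionAutomaton

theorem step {q p : Fin 3} (hp : p ≠ 0) (hq : q = 0 ∨ q = p) (n : ℕ) :
    unionAutomaton.Step (q, ab (n + 1) (p * (n + 1))) (p, ab n (p * n)) := by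
  refine ⟨[a], List.replicate p b, ?_, hp, hq, rfl, rfl⟩
  rw [mul_add_one, add_comm n]
  exact ab_add 1 n _ _

theorem reaches_of_eq_ab {p : Fin 3} (hp : p ≠ 0) (n : ℕ) :
    ReflTransGen unionAutomaton.Step (p, ab n (p * n)) (p, []) := by
  induction n with
  | zero => exact .refl
  | succ n ih => exact .head (step hp (Or.inr rfl) n) ih

theorem eq_ab_of_reaches {p : Fin 3} {cfg : Fin 3 × List Letter}
    (h : ReflTransGen unionAutomaton.Step cfg (p, [])) :
    (cfg.1 = 0 ∨ cfg.1 = p) ∧ ∃ n, cfg.2 = ab n (p * n) := by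
  induction h using ReflTransGen.head_induction_on with
  | refl => exact ⟨Or.inr rfl, 0, rfl⟩
  | head hstep _ ih =>
    obtain ⟨x, y, hw, hne, hq, rfl, rfl⟩ := hstep
    obtain ⟨hp | rfl, n, hn⟩ := ih
    · exact absurd hp hne
    refine ⟨hq, n + 1, ?_⟩
    rw [hw, hn, mul_add_one, add_comm n]
    exact (ab_add 1 n _ _).symm

theorem lang : EqModLambda unionAutomaton.Lang (Lanbn ∪ Lanb2n) := by
  intro w hw
  constructor
  · rintro ⟨p, hp, h⟩
    obtain ⟨-, n, rfl⟩ := eq_ab_of_reaches h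
    rw [ab_mem_union_iff]
    fin_cases p
    · exact absurd rfl hp
    · simp
    · simp
  · have accepts : ∀ p : Fin 3, p ≠ 0 → ∀ n, n ≠ 0 → ab n (p * n) ∈ unionAutomaton.Lang := by
      rintro p hp (_ | n) hn
      · exact absurd rfl hn
      · exact ⟨p, hp, .head (step hp (Or.inl rfl) n) (reaches_of_eq_ab hp n)⟩
    rintro (⟨n, rfl⟩ | ⟨n, rfl⟩)
    · simpa [ab] using accepts 1 (by decide) n (by rintro rfl; exact hw rfl)
    · simpa [ab] using accepts 2 (by decide) n (by rintro rfl; exact hw rfl)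

end unionAutomaton

namespace WKAutomaton

variable {Q : Type} (A : WKAutomaton Letter Q)

def ReadBound (c : ℕ) : Prop :=
  ∀ q x y, (A.δ q x y).Nonempty → x.length ≤ c ∧ y.length ≤ c

theorem exists_readBound : ∃ c, A.ReadBound c := by
  obtain ⟨c, hc⟩ := (A.finite_delta.image fun t => max t.2.1.length t.2.2.length).bddAbove
  exact ⟨c, fun q x y h => max_le_iff.1 (hc ⟨(q, x, y), h, rfl⟩)⟩

def Edge (q p : Q) (i j : ℕ) : Prop :=
  p ∈ A.δ q (List.replicate i a) (List.replicate j b)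

noncomputable def nextState (q : Q) : Q :=
  haveI : Nonempty Q := ⟨q⟩
  Classical.epsilon fun p => ∃ i j, A.Edge q p i j

noncomputable def stateSeq (r : ℕ) : Q :=
  A.nextState^[r] A.q0

def EdgeAt (r i j : ℕ) : Prop :=
  A.Edge (A.stateSeq r) (A.stateSeq (r + 1)) i j

def IsSchedule (sa sb : ℕ → ℕ) : Prop :=
  ∀ r i j, A.EdgeAt r i j ↔ i = sa r ∧ j = sb r

theorem stateSeq_succ (r : ℕ) : A.stateSeq (r + 1) = A.nextState (A.stateSeq r) :=
  Function.iterate_succ_apply' _ _ _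

theorem exists_stateSeq_periodic [Finite Q] :
    ∃ N p, 0 < p ∧ ∀ r, N ≤ r → A.stateSeq (r + p) = A.stateSeq r := by
  obtain ⟨i, j, hne, heq⟩ := Finite.exists_ne_map_eq_of_infinite A.stateSeq
  wlog hij : i < j generalizing i j
  · exact this j i hne.symm heq.symm (by omega)
  refine ⟨i, j - i, by omega, fun r hr => ?_⟩
  obtain ⟨t, rfl⟩ := Nat.exists_eq_add_of_le hr
  simp only [stateSeq] at heq ⊢
  rw [show i + t + (j - i) = t + j by omega, Function.iterate_add_apply, ← heq,
    ← Function.iterate_add_apply, add_comm]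

variable {A}

theorem Edge.step {q p : Q} {i j : ℕ} (h : A.Edge q p i j) (k l : ℕ) :
    A.Step (q, ab (i + k) (l + j)) (p, ab k l) :=
  ⟨_, _, ab_add i k l j, h⟩

theorem ReadBound.edge_le {c : ℕ} (hc : A.ReadBound c) {q p : Q} {i j : ℕ} (h : A.Edge q p i j) :
    i ≤ c ∧ j ≤ c := by
  simpa using hc q _ _ ⟨p, h⟩

theorem Edge.eq_of_quasiDet (hqd : A.QuasiDet) {q p p' : Q} {i j i' j' : ℕ}
    (h : A.Edge q p i j) (h' : A.Edge q p' i' j') : p = p' := by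
  -- both edges apply to the configuration `(q, a^(i + i') b^(j' + j))`
  have hstep' := h'.step i j
  rw [add_comm i', add_comm j] at hstep'
  exact hqd q _ p p' _ _ (h.step i' j') hstep'

theorem Edge.eq_nextState (hqd : A.QuasiDet) {q p : Q} {i j : ℕ} (h : A.Edge q p i j) :
    p = A.nextState q :=
  have ⟨_, _, h'⟩ := Classical.epsilon_spec (⟨p, i, j, h⟩ : ∃ p, ∃ i j, A.Edge q p i j)
  h.eq_of_quasiDet hqd h'

theorem exists_edgeAt_of_step (hqd : A.QuasiDet) {c : ℕ} (hc : A.ReadBound c) {s k l : ℕ}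
    {cfg : Q × List Letter} (hk : c < k) (hl : c < l) (h : A.Step (A.stateSeq s, ab k l) cfg) :
    ∃ i j k' l', A.EdgeAt s i j ∧ k = i + k' ∧ l = l' + j ∧
      cfg = (A.stateSeq (s + 1), ab k' l') := by
  obtain ⟨q, w⟩ := cfg
  obtain ⟨x, y, hw, hq⟩ := h
  obtain ⟨hx, hy⟩ := hc _ _ _ ⟨q, hq⟩
  obtain ⟨k', rfl⟩ := Nat.exists_eq_add_of_le (hx.trans hk.le)
  obtain ⟨l', rfl⟩ := Nat.exists_eq_add_of_le' (hy.trans hl.le)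
  obtain ⟨hx, rfl, hy⟩ := append_eq_ab hw.symm
  rw [hx, hy] at hq
  obtain rfl : q = A.stateSeq (s + 1) := (Edge.eq_nextState hqd hq).trans (A.stateSeq_succ s).symm
  exact ⟨_, _, k', l', hq, rfl, rfl, rfl⟩

theorem mem_lang_of_edgeAt {R : ℕ} {ea eb : ℕ → ℕ} (he : ∀ r < R, A.EdgeAt r (ea r) (eb r))
    {k l : ℕ} (hacc : ∃ qf ∈ A.F, ReflTransGen A.Step (A.stateSeq R, ab k l) (qf, [])) :
    ab (∑ r ∈ range R, ea r + k) (∑ r ∈ range R, eb r + l) ∈ A.Lang := by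
  induction R generalizing k l with
  | zero =>
    rw [sum_range_zero, sum_range_zero, zero_add, zero_add]
    exact hacc
  | succ R ih =>
    obtain ⟨qf, hqf, h⟩ := hacc
    have := ih (fun r hr => he r (by omega)) ⟨qf, hqf, .head ((he R (by omega)).step k l) h⟩
    rwa [sum_range_succ, sum_range_succ, add_assoc, add_assoc, add_comm (eb R)]

variable (A) in
/-- A prefix of an accepting computation on `aⁿbᵐ` along `stateSeq`: its `r`-th step reads
`a^(ea r)` and `b^(eb r)`, and `aᵏbˡ` is left over. -/
structure Run (n m : ℕ) where
  len : ℕ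
  ea : ℕ → ℕ
  eb : ℕ → ℕ
  k : ℕ
  l : ℕ
  edgeAt : ∀ r < len, A.EdgeAt r (ea r) (eb r)
  sum_a : ∑ r ∈ range len, ea r + k = n
  sum_b : ∑ r ∈ range len, eb r + l = m
  accepts : ∃ qf ∈ A.F, ReflTransGen A.Step (A.stateSeq len, ab k l) (qf, [])

namespace Run

variable {n m : ℕ}

def extend (ρ : A.Run n m) {i j k' l' : ℕ} (he : A.EdgeAt ρ.len i j) (hk : ρ.k = i + k')
    (hl : ρ.l = l' + j)
    (hacc : ∃ qf ∈ A.F, ReflTransGen A.Step (A.stateSeq (ρ.len + 1), ab k' l') (qf, [])) :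
    A.Run n m where
  len := ρ.len + 1
  ea := Function.update ρ.ea ρ.len i
  eb := Function.update ρ.eb ρ.len j
  k := k'
  l := l'
  edgeAt r hr := by
    rcases (Nat.lt_succ_iff.1 hr).lt_or_eq with hr | rfl
    · simpa [Function.update_of_ne hr.ne] using ρ.edgeAt r hr
    · simpa using he
  sum_a := by
    rw [sum_range_succ, Function.update_self,
      sum_congr rfl fun r hr => Function.update_of_ne (mem_range.1 hr).ne _ _]
    have := ρ.sum_a
    omega
  sum_b := by
    rw [sum_range_succ, Function.update_self,
      sum_congr rfl fun r hr => Function.update_of_ne (mem_range.1 hr).ne _ _]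
    have := ρ.sum_b
    omega
  accepts := hacc

theorem lt_len {c : ℕ} (hc : A.ReadBound c) (ρ : A.Run n m) (hsmall : ρ.k ≤ c ∨ ρ.l ≤ c) {r : ℕ}
    (hn : c * (r + 1) < n) (hm : c * (r + 1) < m) : r < ρ.len := by
  by_contra! hlen
  have hsum (e : ℕ → ℕ) (he : ∀ r < ρ.len, e r ≤ c) : ∑ r ∈ range ρ.len, e r ≤ c * r :=
    calc ∑ r ∈ range ρ.len, e r ≤ (range ρ.len).card • c :=
          sum_le_card_nsmul _ _ _ fun r hr => he r (mem_range.1 hr)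
      _ ≤ c * r := by rw [card_range, smul_eq_mul, mul_comm]; exact Nat.mul_le_mul_left c hlen
  have ha := hsum ρ.ea fun r hr => (hc.edge_le (ρ.edgeAt r hr)).1
  have hb := hsum ρ.eb fun r hr => (hc.edge_le (ρ.edgeAt r hr)).2
  have := ρ.sum_a
  have := ρ.sum_b
  rw [mul_add_one] at hn hm
  omega

theorem exists_update (ρ : A.Run n m) {r i j : ℕ} (hr : r < ρ.len) (he : A.EdgeAt r i j) :
    ∃ n' m', n' + ρ.ea r = n + i ∧ m' + ρ.eb r = m + j ∧ ab n' m' ∈ A.Lang := by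
  have hmem := mem_lang_of_edgeAt (ea := Function.update ρ.ea r i)
    (eb := Function.update ρ.eb r j) (fun s hs => by
      rcases eq_or_ne s r with rfl | hne
      · simpa using he
      · simpa [hne] using ρ.edgeAt s hs) ρ.accepts
  have hr' := mem_range.2 hr
  rw [sum_update_of_mem hr', sum_update_of_mem hr'] at hmem
  refine ⟨_, _, ?_, ?_, hmem⟩
  · have := sum_eq_add_sum_sdiff_singleton_of_mem hr' ρ.ea
    have := ρ.sum_a
    omega
  · have := sum_eq_add_sum_sdiff_singleton_of_mem hr' ρ.eb
    have := ρ.sum_b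
    omega

theorem sum_schedule {sa sb : ℕ → ℕ} (hs : A.IsSchedule sa sb) (ρ : A.Run n m) :
    ∑ r ∈ range ρ.len, sa r + ρ.k = n ∧ ∑ r ∈ range ρ.len, sb r + ρ.l = m := by
  have h r (hr : r ∈ range ρ.len) := (hs r _ _).1 (ρ.edgeAt r (mem_range.1 hr))
  rw [← sum_congr rfl fun r hr => (h r hr).1, ← sum_congr rfl fun r hr => (h r hr).2]
  exact ⟨ρ.sum_a, ρ.sum_b⟩

theorem mem_lang_of_stateSeq_eq {sa sb : ℕ → ℕ} (hs : A.IsSchedule sa sb) (ρ : A.Run n m)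
    {R : ℕ} (hR : A.stateSeq R = A.stateSeq ρ.len) :
    ab (∑ r ∈ range R, sa r + ρ.k) (∑ r ∈ range R, sb r + ρ.l) ∈ A.Lang :=
  mem_lang_of_edgeAt (fun r _ => (hs r _ _).2 ⟨rfl, rfl⟩) (hR ▸ ρ.accepts)

end Run

theorem exists_run_of_mem_lang (hqd : A.QuasiDet) {c : ℕ} (hc : A.ReadBound c) {n m : ℕ}
    (h : ab n m ∈ A.Lang) : ∃ ρ : A.Run n m, ρ.k ≤ c ∨ ρ.l ≤ c := by
  suffices ∀ ρ : A.Run n m, ∃ ρ' : A.Run n m, ρ'.k ≤ c ∨ ρ'.l ≤ c from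
    this ⟨0, 0, 0, n, m, by simp, by simp, by simp, h⟩
  intro ρ
  obtain ⟨qf, hqf, hrun⟩ := ρ.accepts
  generalize hcfg : (A.stateSeq ρ.len, ab ρ.k ρ.l) = cfg at hrun
  induction hrun using ReflTransGen.head_induction_on generalizing ρ with
  | refl =>
    obtain ⟨hk, -⟩ : ρ.k = 0 ∧ ρ.l = 0 := by simpa [ab] using congrArg Prod.snd hcfg
    exact ⟨ρ, Or.inl (by omega)⟩
  | head hstep htail ih =>
    by_cases hsmall : ρ.k ≤ c ∨ ρ.l ≤ c
    · exact ⟨ρ, hsmall⟩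
    simp only [not_or, not_le] at hsmall
    rw [← hcfg] at hstep
    obtain ⟨i, j, k', l', he, hk, hl, rfl⟩ := exists_edgeAt_of_step hqd hc hsmall.1 hsmall.2 hstep
    exact ih (ρ.extend he hk hl ⟨qf, hqf, htail⟩) rfl


theorem exists_edgeAt (hqd : A.QuasiDet) {c : ℕ} (hc : A.ReadBound c)
    (hL : EqModLambda A.Lang (Lanbn ∪ Lanb2n)) (r : ℕ) : ∃ i j, A.EdgeAt r i j := by
  obtain ⟨ρ, hsmall⟩ := exists_run_of_mem_lang hqd hc
    (ab_self_mem_of_eqModLambda hL (n := c * (r + 1) + 1) (by omega))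
  exact ⟨_, _, ρ.edgeAt r (ρ.lt_len hc hsmall (by omega) (by omega))⟩

theorem edgeAt_unique (hqd : A.QuasiDet) {c : ℕ} (hc : A.ReadBound c)
    (hL : EqModLambda A.Lang (Lanbn ∪ Lanb2n)) {r i j i' j' : ℕ} (h : A.EdgeAt r i j)
    (h' : A.EdgeAt r i' j') : i = i' ∧ j = j' := by
  obtain ⟨n, hn, hnr⟩ : ∃ n, 3 * c < n ∧ c * (r + 1) < n :=
    ⟨c * (r + 1) + 3 * c + 1, by omega, by omega⟩
  obtain ⟨ρ₁, hρ₁⟩ := exists_run_of_mem_lang hqd hc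
    (ab_self_mem_of_eqModLambda hL (n := n) (by omega))
  obtain ⟨ρ₂, hρ₂⟩ := exists_run_of_mem_lang hqd hc
    (ab_two_mul_mem_of_eqModLambda hL (n := n) (by omega))
  have hr₁ := ρ₁.lt_len hc hρ₁ hnr hnr
  have hr₂ := ρ₂.lt_len hc hρ₂ hnr (by omega)
  -- Putting `(i, j)` in place of the `r`-th step of `ρ₁` or `ρ₂` yields another accepted word,
  -- which for large `n` lies in the same one of the two languages.
  have key : ∀ i j, A.EdgeAt r i j →
      j + ρ₁.ea r = i + ρ₁.eb r ∧ j + 2 * ρ₂.ea r = 2 * i + ρ₂.eb r := by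
    intro i j he
    have := hc.edge_le he
    have := hc.edge_le (ρ₁.edgeAt r hr₁)
    have := hc.edge_le (ρ₂.edgeAt r hr₂)
    obtain ⟨n₁, m₁, hn₁, hm₁, h₁⟩ := ρ₁.exists_update hr₁ he
    obtain ⟨n₂, m₂, hn₂, hm₂, h₂⟩ := ρ₂.exists_update hr₂ he
    rw [ab_mem_iff_of_eqModLambda hL (by omega)] at h₁ h₂
    omega
  have := key i j h
  have := key i' j' h'
  omega

theorem exists_isSchedule (hqd : A.QuasiDet) {c : ℕ} (hc : A.ReadBound c)
    (hL : EqModLambda A.Lang (Lanbn ∪ Lanb2n)) : ∃ sa sb, A.IsSchedule sa sb := by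
  choose sa sb hs using exists_edgeAt hqd hc hL
  refine ⟨sa, sb, fun r i j => ⟨fun h => edgeAt_unique hqd hc hL h (hs r), ?_⟩⟩
  rintro ⟨rfl, rfl⟩
  exact hs r

namespace IsSchedule

variable {sa sb : ℕ → ℕ}

theorem le {c : ℕ} (hc : A.ReadBound c) (hs : A.IsSchedule sa sb) (r : ℕ) : sa r ≤ c ∧ sb r ≤ c :=
  hc.edge_le ((hs r _ _).2 ⟨rfl, rfl⟩)

theorem periodic (hs : A.IsSchedule sa sb) {N p : ℕ}
    (hper : ∀ r, N ≤ r → A.stateSeq (r + p) = A.stateSeq r) {r : ℕ} (hr : N ≤ r) :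
    sa (r + p) = sa r ∧ sb (r + p) = sb r := by
  have : A.EdgeAt (r + p) (sa r) (sb r) := by
    rw [EdgeAt, add_right_comm, hper r hr, hper (r + 1) (by omega)]
    exact (hs r _ _).2 ⟨rfl, rfl⟩
  obtain ⟨ha, hb⟩ := (hs _ _ _).1 this
  exact ⟨ha.symm, hb.symm⟩

end IsSchedule

theorem period_sums_eq_zero (hqd : A.QuasiDet) {c : ℕ} (hc : A.ReadBound c)
    (hL : EqModLambda A.Lang (Lanbn ∪ Lanb2n)) {sa sb : ℕ → ℕ} (hs : A.IsSchedule sa sb)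
    {N p : ℕ} (hper : ∀ r, N ≤ r → A.stateSeq (r + p) = A.stateSeq r) :
    ∑ i ∈ range p, sa (N + i) = 0 ∧ ∑ i ∈ range p, sb (N + i) = 0 := by
  set α := ∑ i ∈ range p, sa (N + i)
  set β := ∑ i ∈ range p, sb (N + i)
  have pump {n m : ℕ} (h : ab n m ∈ A.Lang) (hn : c * (N + 1) < n) (hm : c * (N + 1) < m) :
      ab (n + α) (m + β) ∈ A.Lang := by
    obtain ⟨ρ, hsmall⟩ := exists_run_of_mem_lang hqd hc h
    have hN := ρ.lt_len hc hsmall hn hm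
    have hmem := ρ.mem_lang_of_stateSeq_eq hs (hper ρ.len hN.le)
    rw [sum_range_add_of_periodic (fun r hr => (hs.periodic hper hr).1) hN.le,
      sum_range_add_of_periodic (fun r hr => (hs.periodic hper hr).2) hN.le] at hmem
    obtain ⟨ha, hb⟩ := ρ.sum_schedule hs
    convert hmem using 2 <;> omega
  have hβ : β ≤ p * c :=
    calc β ≤ (range p).card • c := sum_le_card_nsmul _ _ _ fun i _ => (hs.le hc _).2
      _ = p * c := by rw [card_range, smul_eq_mul]
  set n := c * (N + 1) + p * c + 1
  have h₁ := pump (ab_self_mem_of_eqModLambda hL (n := n) (by omega)) (by omega) (by omega)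
  have h₂ := pump (ab_two_mul_mem_of_eqModLambda hL (n := n) (by omega)) (by omega) (by omega)
  rw [ab_mem_iff_of_eqModLambda hL (by omega)] at h₁ h₂
  omega

theorem not_acceptsWith_quasiDet :
    ¬ AcceptsWith Letter (fun _ A => A.QuasiDet) (Lanbn ∪ Lanb2n) := by
  rintro ⟨Q, _, A, hqd, hL⟩
  obtain ⟨c, hc⟩ := A.exists_readBound
  obtain ⟨sa, sb, hs⟩ := exists_isSchedule hqd hc hL
  obtain ⟨N, p, hp, hper⟩ := A.exists_stateSeq_periodic
  obtain ⟨hα, hβ⟩ := period_sums_eq_zero hqd hc hL hs hper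
  have hSa := sum_range_le_of_periodic (fun r hr => (hs.periodic hper hr).1) hp hα
  have hSb := sum_range_le_of_periodic (fun r hr => (hs.periodic hper hr).2) hp hβ
  set n := ∑ i ∈ range N, sa i + ∑ i ∈ range N, sb i + c + 1
  obtain ⟨ρ, hsmall⟩ := exists_run_of_mem_lang hqd hc
    (ab_self_mem_of_eqModLambda hL (n := n) (by omega))
  obtain ⟨ha, hb⟩ := ρ.sum_schedule hs
  have := hSa ρ.len
  have := hSb ρ.len
  omega

end WKAutomaton

/-- The class of languages accepted by quasi-deterministic sensing 5'→3' WK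
automata is a proper subset of the class of languages accepted by
(nondeterministic) sensing 5'→3' WK automata; in particular,
`L = { aⁿbⁿ } ∪ { aⁿb²ⁿ }` is accepted by a sensing 5'→3' WK automaton but by
no quasi-deterministic one. -/
theorem quasiDet_proper_subset_of_nondet :
    (∀ (T : Type) (L : Set (List T)),
      AcceptsWith T (fun _ A => A.QuasiDet) L →
      AcceptsWith T (fun _ _ => True) L) ∧
    AcceptsWith Letter (fun _ _ => True) (Lanbn ∪ Lanb2n) ∧
    ¬ AcceptsWith Letter (fun _ A => A.QuasiDet) (Lanbn ∪ Lanb2n) :=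
  ⟨fun _ _ ⟨Q, hQ, A, _, hA⟩ => ⟨Q, hQ, A, trivial, hA⟩,
    ⟨Fin 3, inferInstance, unionAutomaton, trivial, unionAutomaton.lang⟩,
    WKAutomaton.not_acceptsWith_quasiDet⟩
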